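/- If P₁ and P₂ are convex polytopes in ℝ^n with the same set of facet normal vectors, u is a facet normal of both with F(P₂,u) a translate of F(P₁,u), and F(P₁,v) is a facet of P₁ adjacent to F(P₁,u) (meeting it in an (n−2)-face), then F(P₂,v) is a facet of P₂ adjacent to F(P₂,u). -/

import Mathlib

open scoped RealInnerProductSpace Pointwise

variable {n : ℕ}

/-- The support set (face) `F_P(u) = {x ∈ P : ⟪x,u⟫ = h_P(u)}`. -/
def supportSet (K : Set (EuclideanSpace ℝ (Fin n))) (u : EuclideanSpace ℝ (Fin n)) :
    Set (EuclideanSpace ℝ (Fin n)) :=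
  {x ∈ K | ⟪x, u⟫ = sSup ((fun y => ⟪y, u⟫) '' K)}

/-!
Pick `g ∈ F(P₂,u)` maximizing `v` on `F(P₂,u)`; it is a translate of a point of the ridge
`R = F(P₁,u) ∩ F(P₁,v)`. Rotate the normal `e_s = (1-s)u + sv` from `u` to `v` and keep track of
how long `g` stays in `F(P₂,e_s)`. For `0 < s < 1` the face `F(P₁,e_s)` lies in `R`, so it is not
a facet, hence neither is `F(P₂,e_s)`; since that face contains the `(n-2)`-dimensional translate
of `R`, it is parallel to it and so orthogonal to `v - u`, which lets `g` stay maximal slightly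
beyond `s`. A closedness argument then gives `g ∈ F(P₂,v)`, and `F(P₂,u) ∩ F(P₂,v)` is the
translate of `R`. When `R` is empty (only possible for `n ≤ 2`), it suffices that faces with
distinct unit normals of a full-dimensional body meet in dimension at most `n - 2`.
-/

open Set Filter Topology Module Bornology

section SupportSet

variable {K A : Set (EuclideanSpace ℝ (Fin n))} {u v w e d g x : EuclideanSpace ℝ (Fin n)}

theorem supportSet_subset : supportSet K u ⊆ K := fun _ hx => hx.1

theorem inner_eq_of_mem_supportSet (hx : x ∈ supportSet K u) (hg : g ∈ supportSet K u) :
    ⟪x, u⟫ = ⟪g, u⟫ :=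
  hx.2.trans hg.2.symm

theorem mem_supportSet_of_forall_inner_le (hg : g ∈ K) (h : ∀ x ∈ K, ⟪x, u⟫ ≤ ⟪g, u⟫) :
    g ∈ supportSet K u :=
  ⟨hg, (IsGreatest.csSup_eq ⟨mem_image_of_mem _ hg, forall_mem_image.2 h⟩).symm⟩

theorem Bornology.IsBounded.bddAbove_image_inner (hK : IsBounded K)
    (u : EuclideanSpace ℝ (Fin n)) : BddAbove ((fun y => ⟪y, u⟫) '' K) := by
  have h : (fun y => ⟪y, u⟫) = innerSL ℝ u := funext fun y => real_inner_comm u y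
  rw [h]
  exact ((innerSL ℝ u).lipschitz.isBounded_image hK).bddAbove

theorem mem_supportSet_iff_forall_inner_le (hK : IsBounded K) :
    g ∈ supportSet K u ↔ g ∈ K ∧ ∀ x ∈ K, ⟪x, u⟫ ≤ ⟪g, u⟫ := by
  refine ⟨fun hg => ⟨hg.1, fun x hx => ?_⟩, fun h => mem_supportSet_of_forall_inner_le h.1 h.2⟩
  rw [hg.2]
  exact le_csSup (hK.bddAbove_image_inner u) (mem_image_of_mem _ hx)

theorem supportSet_smul (hK : IsBounded K) {c : ℝ} (hc : 0 < c)
    (u : EuclideanSpace ℝ (Fin n)) : supportSet K (c • u) = supportSet K u := by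
  ext g
  simp only [mem_supportSet_iff_forall_inner_le hK, real_inner_smul_right,
    mul_le_mul_iff_of_pos_left hc]

theorem supportSet_image_add (hK : IsBounded K) (y u : EuclideanSpace ℝ (Fin n)) :
    supportSet ((y + ·) '' K) u = (y + ·) '' supportSet K u := by
  have hyK : IsBounded ((y + ·) '' K) := (isometry_add_left y).lipschitz.isBounded_image hK
  ext g
  rw [mem_supportSet_iff_forall_inner_le hyK, forall_mem_image]
  constructor
  · rintro ⟨⟨k, hk, rfl⟩, h⟩
    refine ⟨k, (mem_supportSet_iff_forall_inner_le hK).2 ⟨hk, fun x hx => ?_⟩, rfl⟩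
    simpa only [inner_add_left, add_le_add_iff_left] using h hx
  · rintro ⟨k, hk, rfl⟩
    rw [mem_supportSet_iff_forall_inner_le hK] at hk
    exact ⟨mem_image_of_mem _ hk.1, fun x hx => by
      simpa only [inner_add_left, add_le_add_iff_left] using hk.2 x hx⟩

theorem vectorSpan_image_add (y : EuclideanSpace ℝ (Fin n))
    (A : Set (EuclideanSpace ℝ (Fin n))) : vectorSpan ℝ ((y + ·) '' A) = vectorSpan ℝ A :=
  vectorSpan_vadd ℝ A y

theorem supportSet_supportSet_eq_inter (hK : IsBounded K)
    (h : (supportSet K u ∩ supportSet K v).Nonempty) :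
    supportSet (supportSet K u) v = supportSet K u ∩ supportSet K v := by
  obtain ⟨g, hgu, hgv⟩ := h
  ext x
  rw [mem_supportSet_iff_forall_inner_le (hK.subset supportSet_subset), mem_inter_iff,
    mem_supportSet_iff_forall_inner_le hK (u := v)]
  constructor
  · rintro ⟨hxu, hx⟩
    exact ⟨hxu, hxu.1, fun z hz =>
      (((mem_supportSet_iff_forall_inner_le hK).1 hgv).2 z hz).trans (hx g hgu)⟩
  · rintro ⟨hxu, -, hx⟩
    exact ⟨hxu, fun z hz => hx z hz.1⟩

theorem supportSet_smul_add_smul (hK : IsBounded K) {a b : ℝ} (ha : 0 < a) (hb : 0 < b)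
    (h : (supportSet K u ∩ supportSet K v).Nonempty) :
    supportSet K (a • u + b • v) = supportSet K u ∩ supportSet K v := by
  obtain ⟨x₀, hx₀u, hx₀v⟩ := h
  simp only [Set.ext_iff, mem_inter_iff, mem_supportSet_iff_forall_inner_le hK, inner_add_right,
    real_inner_smul_right] at hx₀u hx₀v ⊢
  intro g
  constructor
  · rintro ⟨hg, h⟩
    have hsum := h x₀ hx₀u.1
    have hu := hx₀u.2 g hg
    have hv := hx₀v.2 g hg
    exact ⟨⟨hg, fun x hx => by nlinarith [hx₀u.2 x hx]⟩,
      ⟨hg, fun x hx => by nlinarith [hx₀v.2 x hx]⟩⟩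
  · rintro ⟨⟨hg, hu⟩, -, hv⟩
    exact ⟨hg, fun x hx => by nlinarith [hu x hx, hv x hx]⟩

theorem supportSet_inter_supportSet_neg (hK : IsBounded K) (hint : (interior K).Nonempty)
    (hu : u ≠ 0) : supportSet K u ∩ supportSet K (-u) = ∅ := by
  obtain ⟨c, hc⟩ := hint
  have hline : ∀ᶠ t : ℝ in 𝓝[>] 0, c + t • u ∈ K := by
    refine nhdsWithin_le_nhds <|
      Continuous.tendsto' (by fun_prop) 0 c ?_ (mem_interior_iff_mem_nhds.1 hc)
    simp
  obtain ⟨t, ht, ht0⟩ := (hline.and self_mem_nhdsWithin).exists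
  refine eq_empty_of_forall_notMem fun x ⟨hxu, hxv⟩ => ?_
  have h₁ := ((mem_supportSet_iff_forall_inner_le hK).1 hxu).2 _ ht
  have h₂ := ((mem_supportSet_iff_forall_inner_le hK).1 hxv).2 _ (interior_subset hc)
  rw [inner_add_left, real_inner_smul_left, real_inner_self_eq_norm_sq] at h₁
  rw [inner_neg_right, inner_neg_right, neg_le_neg_iff] at h₂
  nlinarith [mul_pos ht0 (pow_pos (norm_pos_iff.2 hu) 2)]

theorem smul_add_smul_ne_zero (hK : IsBounded K) (hint : (interior K).Nonempty) (hu : u ≠ 0)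
    {a b : ℝ} (ha : 0 < a) (hb : 0 < b) (h : (supportSet K u ∩ supportSet K v).Nonempty) :
    a • u + b • v ≠ 0 := by
  intro h0
  have hbv : b • v = a • -u := by linear_combination (norm := module) h0
  have hv : supportSet K v = supportSet K (-u) := by
    rw [← supportSet_smul hK hb v, hbv, supportSet_smul hK ha]
  rw [hv, supportSet_inter_supportSet_neg hK hint hu] at h
  exact not_nonempty_empty h

theorem supportSet_supportSet_sub (hK : IsBounded K) :
    supportSet (supportSet K u) (v - u) = supportSet (supportSet K u) v := by
  ext g
  simp only [mem_supportSet_iff_forall_inner_le (hK.subset supportSet_subset), inner_sub_right]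
  refine and_congr_right fun hg => forall₂_congr fun x hx => ?_
  rw [inner_eq_of_mem_supportSet hx hg, sub_le_sub_iff_right]

theorem vectorSpan_le_orthogonal_of_inner_eq (h : ∀ x ∈ A, ∀ y ∈ A, ⟪x, w⟫ = ⟪y, w⟫) :
    vectorSpan ℝ A ≤ (ℝ ∙ w)ᗮ := by
  rw [vectorSpan_def, Submodule.span_le]
  rintro _ ⟨x, hx, y, hy, rfl⟩
  rw [SetLike.mem_coe, Submodule.mem_orthogonal_singleton_iff_inner_left]
  simp only [vsub_eq_sub, inner_sub_left, h x hx y hy, sub_self]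

theorem finrank_orthogonal_eq_sub (W : Submodule ℝ (EuclideanSpace ℝ (Fin n))) :
    finrank ℝ Wᗮ = n - finrank ℝ W := by
  have := W.finrank_add_finrank_orthogonal
  rw [finrank_euclideanSpace_fin] at this
  omega

theorem vectorSpan_supportSet_le_orthogonal : vectorSpan ℝ (supportSet K u) ≤ (ℝ ∙ u)ᗮ :=
  vectorSpan_le_orthogonal_of_inner_eq fun _ hx _ hy => inner_eq_of_mem_supportSet hx hy

theorem finrank_vectorSpan_supportSet_le (hu : u ≠ 0) :
    finrank ℝ (vectorSpan ℝ (supportSet K u)) ≤ n - 1 := by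
  have := Submodule.finrank_mono (vectorSpan_supportSet_le_orthogonal (K := K) (u := u))
  rwa [finrank_orthogonal_eq_sub, finrank_span_singleton hu] at this

theorem linearIndependent_pair_of_norm_eq_one (hu : ‖u‖ = 1) (hv : ‖v‖ = 1) (huv : u ≠ v)
    (hvu : v ≠ -u) : LinearIndependent ℝ ![u, v] := by
  rw [LinearIndependent.pair_iff' (norm_ne_zero_iff.1 (hu.symm ▸ one_ne_zero))]
  rintro a rfl
  rw [norm_smul, hu, mul_one, Real.norm_eq_abs] at hv
  rcases (abs_eq zero_le_one).1 hv with rfl | rfl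
  · exact huv (one_smul ℝ u).symm
  · exact hvu (neg_one_smul ℝ u)

theorem finrank_vectorSpan_supportSet_inter_le (hK : IsBounded K)
    (hint : (interior K).Nonempty) (hu : ‖u‖ = 1) (hv : ‖v‖ = 1) (huv : u ≠ v) :
    finrank ℝ (vectorSpan ℝ (supportSet K u ∩ supportSet K v)) ≤ n - 2 := by
  by_cases hvu : v = -u
  · rw [hvu, supportSet_inter_supportSet_neg hK hint (norm_ne_zero_iff.1 (hu.symm ▸ one_ne_zero)),
      vectorSpan_empty, finrank_bot]
    exact Nat.zero_le _
  have hspan : finrank ℝ (Submodule.span ℝ {u, v}) = 2 := by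
    rw [← Matrix.range_cons_cons_empty]
    simpa using finrank_span_eq_card (linearIndependent_pair_of_norm_eq_one hu hv huv hvu)
  have hle : vectorSpan ℝ (supportSet K u ∩ supportSet K v) ≤ (Submodule.span ℝ {u, v})ᗮ := by
    rw [Submodule.span_insert, ← Submodule.inf_orthogonal]
    exact le_inf
      ((vectorSpan_mono ℝ inter_subset_left).trans vectorSpan_supportSet_le_orthogonal)
      ((vectorSpan_mono ℝ inter_subset_right).trans vectorSpan_supportSet_le_orthogonal)
  simpa only [finrank_orthogonal_eq_sub, hspan] using Submodule.finrank_mono hle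

/-- A face that is not a facet but contains an `(n-2)`-dimensional set `A` is parallel to `A`,
so every `⟪·, d⟫` constant on `A` is constant on the face. -/
theorem mem_supportSet_supportSet_of_finrank_eq (he : e ≠ 0) (hA : A ⊆ supportSet K e)
    (hAdim : finrank ℝ (vectorSpan ℝ A) = n - 2) (hAd : ∀ x ∈ A, ∀ y ∈ A, ⟪x, d⟫ = ⟪y, d⟫)
    (hKe : finrank ℝ (vectorSpan ℝ (supportSet K e)) ≠ n - 1) (hg : g ∈ supportSet K e) :
    g ∈ supportSet (supportSet K e) d := by
  have hspan : vectorSpan ℝ A = vectorSpan ℝ (supportSet K e) :=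
    Submodule.eq_of_le_of_finrank_le (vectorSpan_mono ℝ hA)
      (by have := finrank_vectorSpan_supportSet_le (K := K) he; omega)
  refine mem_supportSet_of_forall_inner_le hg fun x hx => le_of_eq ?_
  have := vectorSpan_le_orthogonal_of_inner_eq hAd (hspan ▸ vsub_mem_vectorSpan ℝ hx hg)
  rwa [Submodule.mem_orthogonal_singleton_iff_inner_left, vsub_eq_sub, inner_sub_left,
    sub_eq_zero] at this

end SupportSet

section Polytope

variable {S : Finset (EuclideanSpace ℝ (Fin n))} {a d g u : EuclideanSpace ℝ (Fin n)}

theorem Finset.isBounded_convexHull (S : Finset (EuclideanSpace ℝ (Fin n))) :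
    IsBounded (convexHull ℝ (S : Set (EuclideanSpace ℝ (Fin n)))) :=
  (S.finite_toSet.isCompact_convexHull ℝ).isBounded

theorem mem_supportSet_convexHull_iff :
    g ∈ supportSet (convexHull ℝ ↑S) u ↔ g ∈ convexHull ℝ ↑S ∧ ∀ x ∈ S, ⟪x, u⟫ ≤ ⟪g, u⟫ := by
  rw [mem_supportSet_iff_forall_inner_le S.isBounded_convexHull]
  refine and_congr_right fun _ => ⟨fun h x hx => h x (subset_convexHull ℝ _ hx), fun h => ?_⟩
  exact convexHull_min h (convex_halfSpace_le (f := fun x => ⟪x, u⟫)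
    ⟨fun x y => inner_add_left x y u, fun c x => real_inner_smul_left x u c⟩ _)

theorem isClosed_setOf_mem_supportSet_convexHull (S : Finset (EuclideanSpace ℝ (Fin n)))
    (g a d : EuclideanSpace ℝ (Fin n)) :
    IsClosed {t : ℝ | g ∈ supportSet (convexHull ℝ ↑S) (a + t • d)} := by
  simp only [mem_supportSet_convexHull_iff, ofPred_and, ofPred_forall]
  exact isClosed_const.inter (isClosed_iInter fun x => isClosed_iInter fun _ =>
    isClosed_le (by fun_prop) (by fun_prop))

theorem eventually_mem_supportSet_convexHull_add_smul {s : ℝ}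
    (hg : g ∈ supportSet (supportSet (convexHull ℝ ↑S) (a + s • d)) d) :
    ∀ᶠ t in 𝓝[>] s, g ∈ supportSet (convexHull ℝ ↑S) (a + t • d) := by
  have hgs := supportSet_subset hg
  have hgd := ((mem_supportSet_iff_forall_inner_le
    (S.isBounded_convexHull.subset supportSet_subset)).1 hg).2
  simp only [mem_supportSet_convexHull_iff, eventually_and, eventually_const,
    eventually_all_finset] at hgs ⊢
  refine ⟨hgs.1, fun x hx => ?_⟩
  rcases (hgs.2 x hx).lt_or_eq with hlt | heq
  · exact nhdsWithin_le_nhds <| (ContinuousAt.eventually_lt (f := fun t => ⟪x, a + t • d⟫)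
      (by fun_prop) (by fun_prop) hlt).mono fun _ => le_of_lt
  · have hxd := hgd x (mem_supportSet_convexHull_iff.2 ⟨subset_convexHull ℝ _ hx, fun z hz =>
      heq ▸ hgs.2 z hz⟩)
    refine eventually_nhdsWithin_of_forall fun t (ht : s < t) => ?_
    simp only [inner_add_right, real_inner_smul_right] at heq ⊢
    nlinarith

/-- Continuous induction along the segment of normals from `a` to `a + d`. -/
theorem mem_supportSet_convexHull_add_of_forall (h₀ : g ∈ supportSet (convexHull ℝ ↑S) a)
    (hstep : ∀ s ∈ Ico (0 : ℝ) 1, g ∈ supportSet (convexHull ℝ ↑S) (a + s • d) →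
      g ∈ supportSet (supportSet (convexHull ℝ ↑S) (a + s • d)) d) :
    g ∈ supportSet (convexHull ℝ ↑S) (a + d) := by
  set Z := {t : ℝ | g ∈ supportSet (convexHull ℝ ↑S) (a + t • d)}
  have hZ : IsClosed (Z ∩ Icc 0 1) :=
    (isClosed_setOf_mem_supportSet_convexHull S g a d).inter isClosed_Icc
  have hIcc : Icc (0 : ℝ) 1 ⊆ Z :=
    hZ.Icc_subset_of_forall_mem_nhdsWithin (by simpa [Z] using h₀) fun s hs =>
      eventually_mem_supportSet_convexHull_add_smul (hstep s hs.2 hs.1)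
  simpa [Z] using hIcc (right_mem_Icc.2 zero_le_one)

end Polytope

theorem supportSet_inter_eq_image_add {S₁ S₂ : Finset (EuclideanSpace ℝ (Fin n))}
    {u v y : EuclideanSpace ℝ (Fin n)} (hn : 2 ≤ n)
    (hint₁ : (interior (convexHull ℝ (S₁ : Set (EuclideanSpace ℝ (Fin n))))).Nonempty)
    (hfacet : ∀ e : EuclideanSpace ℝ (Fin n), e ≠ 0 →
      finrank ℝ (vectorSpan ℝ (supportSet (convexHull ℝ ↑S₂) e)) = n - 1 →
      finrank ℝ (vectorSpan ℝ (supportSet (convexHull ℝ ↑S₁) e)) = n - 1)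
    (hu : u ≠ 0)
    (hy : supportSet (convexHull ℝ ↑S₂) u = (y + ·) '' supportSet (convexHull ℝ ↑S₁) u)
    (hadj : finrank ℝ (vectorSpan ℝ
      (supportSet (convexHull ℝ ↑S₁) u ∩ supportSet (convexHull ℝ ↑S₁) v)) = n - 2)
    (hne : (supportSet (convexHull ℝ ↑S₁) u ∩ supportSet (convexHull ℝ ↑S₁) v).Nonempty) :
    supportSet (convexHull ℝ ↑S₂) u ∩ supportSet (convexHull ℝ ↑S₂) v =
      (y + ·) '' (supportSet (convexHull ℝ ↑S₁) u ∩ supportSet (convexHull ℝ ↑S₁) v) := by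
  set P₁ := convexHull ℝ (S₁ : Set (EuclideanSpace ℝ (Fin n)))
  set P₂ := convexHull ℝ (S₂ : Set (EuclideanSpace ℝ (Fin n)))
  have hK₁ : IsBounded P₁ := S₁.isBounded_convexHull
  have hK₂ : IsBounded P₂ := S₂.isBounded_convexHull
  set G := supportSet (supportSet P₂ u) v with hGdef
  have hG : G = (y + ·) '' (supportSet P₁ u ∩ supportSet P₁ v) := by
    rw [hGdef, hy, supportSet_image_add (hK₁.subset supportSet_subset),
      supportSet_supportSet_eq_inter hK₁ hne]
  obtain ⟨x₀, hx₀⟩ := hne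
  set g := y + x₀
  have hgG : g ∈ G := hG ▸ mem_image_of_mem _ hx₀
  have hgu : g ∈ supportSet P₂ u := supportSet_subset hgG
  have hGuv : ∀ x ∈ G, ⟪x, u⟫ = ⟪g, u⟫ ∧ ⟪x, v⟫ = ⟪g, v⟫ := fun x hx =>
    ⟨inner_eq_of_mem_supportSet (supportSet_subset hx) hgu, inner_eq_of_mem_supportSet hx hgG⟩
  suffices hgv : g ∈ supportSet P₂ v from
    (supportSet_supportSet_eq_inter hK₂ ⟨g, hgu, hgv⟩).symm.trans hG
  have key : ∀ s ∈ Ico (0 : ℝ) 1, g ∈ supportSet P₂ (u + s • (v - u)) →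
      g ∈ supportSet (supportSet P₂ (u + s • (v - u))) (v - u) := by
    rintro s ⟨hs0, hs1⟩ hgs
    rcases hs0.eq_or_lt with rfl | hs0
    · rwa [zero_smul, add_zero, supportSet_supportSet_sub hK₂]
    have he : u + s • (v - u) = (1 - s) • u + s • v := by module
    have he0 : u + s • (v - u) ≠ 0 :=
      he ▸ smul_add_smul_ne_zero hK₁ hint₁ hu (sub_pos.2 hs1) hs0 ⟨x₀, hx₀⟩
    have hsub : supportSet P₁ (u + s • (v - u)) ⊆ supportSet P₁ u ∩ supportSet P₁ v := by
      rw [he, supportSet_smul_add_smul hK₁ (sub_pos.2 hs1) hs0 ⟨x₀, hx₀⟩]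
    refine mem_supportSet_supportSet_of_finrank_eq he0 (A := G) (fun x hx => ?_) ?_
      (fun x hx z hz => ?_) (fun h => ?_) hgs
    · refine mem_supportSet_of_forall_inner_le (supportSet_subset (supportSet_subset hx))
        fun z hz => ?_
      have := ((mem_supportSet_iff_forall_inner_le hK₂).1 hgs).2 z hz
      simp only [inner_add_right, real_inner_smul_right, inner_sub_right] at this ⊢
      rwa [(hGuv x hx).1, (hGuv x hx).2]
    · rw [hG, vectorSpan_image_add, hadj]
    · rw [inner_sub_right, inner_sub_right, (hGuv x hx).1, (hGuv x hx).2, (hGuv z hz).1,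
        (hGuv z hz).2]
    · have := Submodule.finrank_mono (vectorSpan_mono ℝ hsub)
      rw [hfacet _ he0 h, hadj] at this
      omega
  simpa using mem_supportSet_convexHull_add_of_forall hgu key

/-- If `P₁`, `P₂` are `n`-dimensional convex polytopes in `ℝⁿ` with the same set of facet
normal vectors, `u` is a facet normal of both with `F(P₂,u)` a translate of `F(P₁,u)`, and
`F(P₁,v)` is a facet of `P₁` adjacent to `F(P₁,u)` (meeting it in an `(n-2)`-face), then
`F(P₂,v)` is a facet of `P₂` adjacent to `F(P₂,u)`. -/
theorem stmt16 (P₁ P₂ : Set (EuclideanSpace ℝ (Fin n)))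
    (hP₁ : ∃ S : Finset (EuclideanSpace ℝ (Fin n)), P₁ = convexHull ℝ (S : Set _))
    (hP₂ : ∃ S : Finset (EuclideanSpace ℝ (Fin n)), P₂ = convexHull ℝ (S : Set _))
    (hdim₁ : (interior P₁).Nonempty) (hdim₂ : (interior P₂).Nonempty)
    (hsame : ∀ w : EuclideanSpace ℝ (Fin n), ‖w‖ = 1 →
      (Module.finrank ℝ (vectorSpan ℝ (supportSet P₁ w)) = n - 1 ↔
       Module.finrank ℝ (vectorSpan ℝ (supportSet P₂ w)) = n - 1))
    (u : EuclideanSpace ℝ (Fin n)) (hu : ‖u‖ = 1)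
    (hufacet : Module.finrank ℝ (vectorSpan ℝ (supportSet P₁ u)) = n - 1)
    (htrans : ∃ y : EuclideanSpace ℝ (Fin n),
      supportSet P₂ u = (fun x => y + x) '' supportSet P₁ u)
    (v : EuclideanSpace ℝ (Fin n)) (hv : ‖v‖ = 1)
    (hvfacet : Module.finrank ℝ (vectorSpan ℝ (supportSet P₁ v)) = n - 1)
    (hadj : Module.finrank ℝ (vectorSpan ℝ (supportSet P₁ u ∩ supportSet P₁ v)) = n - 2) :
    Module.finrank ℝ (vectorSpan ℝ (supportSet P₂ v)) = n - 1 ∧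
    Module.finrank ℝ (vectorSpan ℝ (supportSet P₂ u ∩ supportSet P₂ v)) = n - 2 := by
  obtain ⟨S₁, rfl⟩ := hP₁
  obtain ⟨S₂, rfl⟩ := hP₂
  have hu0 : u ≠ 0 := norm_ne_zero_iff.1 (hu.symm ▸ one_ne_zero)
  have hfacet : ∀ e : EuclideanSpace ℝ (Fin n), e ≠ 0 →
      finrank ℝ (vectorSpan ℝ (supportSet (convexHull ℝ ↑S₂) e)) = n - 1 →
      finrank ℝ (vectorSpan ℝ (supportSet (convexHull ℝ ↑S₁) e)) = n - 1 := fun e he => by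
    have hc : 0 < ‖e‖⁻¹ := inv_pos.2 (norm_pos_iff.2 he)
    have := hsame (‖e‖⁻¹ • e) (norm_smul_inv_norm (𝕜 := ℝ) he)
    rw [supportSet_smul S₁.isBounded_convexHull hc, supportSet_smul S₂.isBounded_convexHull hc]
      at this
    exact this.2
  refine ⟨(hsame v hv).1 hvfacet, ?_⟩
  by_cases h : 2 ≤ n ∧ (supportSet (convexHull ℝ ↑S₁) u ∩ supportSet (convexHull ℝ ↑S₁) v).Nonempty
  · obtain ⟨y, hy⟩ := htrans
    rw [supportSet_inter_eq_image_add h.1 hdim₁ hfacet hu0 hy hadj h.2, vectorSpan_image_add, hadj]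
  have hn : n - 2 = 0 := by
    rcases not_and_or.1 h with h | h
    · omega
    · rwa [not_nonempty_iff_eq_empty.1 h, vectorSpan_empty, finrank_bot, eq_comm] at hadj
  refine le_antisymm ?_ (hn ▸ Nat.zero_le _)
  rcases eq_or_ne u v with rfl | huv
  · rw [inter_self] at hadj ⊢
    have := finrank_vectorSpan_supportSet_le (K := convexHull ℝ ↑S₂) hu0
    omega
  · exact finrank_vectorSpan_supportSet_inter_le S₂.isBounded_convexHull hdim₂ hu hv huv
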